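/- Let {s_1,...,s_K} be an (M,K,L)-schedule sequence set with respect to a partition of the K nodes into W nonempty groups whose smallest group size is k ≥ 2. Then L ≥ 4W(k−1). -/

import Mathlib

/-- A schedule symbol for a system with `W` channels: `T m` means "transmit on
channel `m`" and `R r` means "receive on channel `r`". -/
inductive SchedSym (W : ℕ) where
  | T : Fin W → SchedSym W
  | R : Fin W → SchedSym W
deriving DecidableEq

/-- `IsScheduleSet W K L G s` says that `s` is an `(M,K,L)`-schedule sequence set
(for any number of channels `M ≥ W`) with respect to the partition of the `K` nodes
into the `W` groups given by the group-assignment map `G` (node `i` lies in group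
`G i`). Sequences are modeled as `ℕ → SchedSym W`, indexed modulo `L`.

* `own_channel`: a node in group `m` only uses the transmit symbol `T m`;
* `intra`: intra-group requirement (eq. (1) of the paper) for all offsets `τ ∈ Z_L^K`;
* `inter`: inter-group requirement (eq. (2) of the paper) for all offsets `τ ∈ Z_L^K`. -/
structure IsScheduleSet (W K L : ℕ) (G : Fin K → Fin W)
    (s : Fin K → ℕ → SchedSym W) : Prop where
  own_channel : ∀ (i : Fin K) (t : ℕ) (m : Fin W), s i t = SchedSym.T m → m = G i
  intra : ∀ τ : Fin K → ℕ, (∀ i, τ i < L) → ∀ i j : Fin K, i ≠ j → G i = G j →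
    ∃ t < L, s i ((t + τ i) % L) = SchedSym.T (G i) ∧
      s j ((t + τ j) % L) = SchedSym.R (G i) ∧
      ∀ x : Fin K, x ≠ i → x ≠ j → G x = G i → s x ((t + τ x) % L) ≠ SchedSym.T (G i)
  inter : ∀ τ : Fin K → ℕ, (∀ i, τ i < L) → ∀ i j : Fin K, G i ≠ G j →
    ∃ t < L, s i ((t + τ i) % L) = SchedSym.T (G i) ∧
      s j ((t + τ j) % L) = SchedSym.R (G i) ∧
      ∀ x : Fin K, x ≠ i → G x = G i → s x ((t + τ x) % L) ≠ SchedSym.T (G i)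

/-- The size of group `m` under the group-assignment map `G`. -/
def groupSize {W K : ℕ} (G : Fin K → Fin W) (m : Fin W) : ℕ :=
  (Finset.univ.filter (fun i => G i = m)).card


/-!
Let `i₀` be a node that transmits most often, in `A` of the `L` slots, and let `B m` be the
number of slots in which it listens on channel `m`, so that `A + ∑ m, B m = L`. Take a node `i`
of group `m` other than `i₀` and a relative shift `σ` of the two sequences. The slots in which
`i` transmits while the shifted `i₀` listens on channel `m` must outnumber the at least `k - 2`
other members of group `m`: otherwise those members can be delayed so that each such slot is
also used by one of them, and `i₀` never hears `i`. Summing over the `L` shifts gives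
`(k - 1) L ≤ A (B m)`, and summing over the channels `W (k - 1) L ≤ A (L - A) ≤ L ^ 2 / 4`.
-/

open Finset

theorem Finset.exists_subset_image_of_card_le {α β : Type*} [Nonempty α] [DecidableEq α]
    {s : Finset β} {t : Finset α} (h : #t ≤ #s) : ∃ f : β → α, t ⊆ s.image f := by
  obtain rfl | ⟨a, ha⟩ := t.eq_empty_or_nonempty
  · exact ⟨fun _ => Classical.arbitrary α, empty_subset _⟩
  obtain ⟨b, -⟩ := card_pos.mp ((card_pos.mpr ⟨a, ha⟩).trans_le h)
  have : Nonempty β := ⟨b⟩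
  obtain ⟨g, hmaps, hinj⟩ := t.finite_toSet.exists_injOn_of_encard_le (t := (s : Set β))
    (by simpa only [Set.encard_coe_eq_coe_finsetCard, Nat.cast_le] using h)
  exact ⟨Function.invFunOn g t, surjOn_iff_subset_image.mp (hinj.leftInvOn_invFunOn.surjOn hmaps)⟩

theorem Nat.add_mod_add_sub_mod {t u L : ℕ} (ht : t < L) (hu : u < L) :
    (t + (u + L - t) % L) % L = u := by
  rw [Nat.add_mod_mod, Nat.add_sub_cancel' (by omega), Nat.add_mod_right, Nat.mod_eq_of_lt hu]

theorem sum_card_filter_shift_le (L : ℕ) (A : Finset ℕ) (Q : ℕ → Prop) [DecidablePred Q] :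
    ∑ σ ∈ range L, #{t ∈ A | Q ((t + σ) % L)} ≤ #A * #{u ∈ range L | Q u} := by
  have hshift : ∀ t, #{σ ∈ range L | Q ((t + σ) % L)} ≤ #{u ∈ range L | Q u} := by
    intro t
    refine card_le_card_of_injOn (fun σ => (t + σ) % L) (fun σ hσ => ?_) (fun σ₁ h₁ σ₂ h₂ h => ?_)
    · simp only [coe_filter, mem_range, Set.mem_ofPred_eq] at hσ ⊢
      exact ⟨Nat.mod_lt _ (by omega), hσ.2⟩
    · simp only [coe_filter, mem_range, Set.mem_ofPred_eq] at h₁ h₂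
      simpa only [Nat.ModEq, Nat.mod_eq_of_lt h₁.1, Nat.mod_eq_of_lt h₂.1]
        using Nat.ModEq.add_left_cancel' t h
  calc ∑ σ ∈ range L, #{t ∈ A | Q ((t + σ) % L)}
      = ∑ t ∈ A, #{σ ∈ range L | Q ((t + σ) % L)} := by
        simp only [card_filter]
        exact sum_comm
    _ ≤ ∑ _t ∈ A, #{u ∈ range L | Q u} := sum_le_sum fun t _ => hshift t
    _ = #A * #{u ∈ range L | Q u} := by rw [sum_const, smul_eq_mul]

def symbolSlots {W : ℕ} (L : ℕ) (f : ℕ → SchedSym W) (a : SchedSym W) : Finset ℕ :=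
  {t ∈ range L | f t = a}

def interferers {W K : ℕ} (G : Fin K → Fin W) (i j : Fin K) : Finset (Fin K) :=
  {x | x ≠ i ∧ x ≠ j ∧ G x = G i}

section Schedule

variable {W K L : ℕ}

theorem card_symbolSlots_transmit_add_sum_receive (f : ℕ → SchedSym W) (m₀ : Fin W)
    (hf : ∀ t m, f t = .T m → m = m₀) :
    #(symbolSlots L f (.T m₀)) + ∑ m, #(symbolSlots L f (.R m)) = L := by
  classical
  have hmaps : Set.MapsTo f (range L) ↑(insert (.T m₀) (univ.image SchedSym.R)) := by
    intro t _
    cases h : f t with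
    | T m => simp [hf t m h]
    | R m => simp
  have hfibres := card_eq_sum_card_fiberwise hmaps
  rw [card_range, sum_insert (by simp), sum_image fun _ _ _ _ h => SchedSym.R.inj h] at hfibres
  exact hfibres.symm

theorem groupSize_le (G : Fin K → Fin W) (m : Fin W) : groupSize G m ≤ K :=
  (card_filter_le _ _).trans_eq (card_fin K)

theorem groupSize_le_card_interferers_add_two (G : Fin K → Fin W) (i j : Fin K) :
    groupSize G (G i) ≤ #(interferers G i j) + 2 := by
  classical
  calc groupSize G (G i) ≤ #(insert i (insert j (interferers G i j))) := by
        refine card_le_card fun x hx => ?_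
        simp only [mem_filter, mem_univ, true_and] at hx
        simp only [interferers, mem_insert, mem_filter, mem_univ, true_and]
        tauto
    _ ≤ #(interferers G i j) + 2 := (card_insert_le _ _).trans (by grind [card_insert_le])

theorem exists_ne_of_two_le_groupSize {G : Fin K → Fin W} {m : Fin W}
    (h : 2 ≤ groupSize G m) (x : Fin K) : ∃ y, G y = m ∧ y ≠ x := by
  obtain ⟨y, hy, hyx⟩ := exists_mem_ne (lt_of_lt_of_le one_lt_two h) x
  exact ⟨y, (mem_filter.mp hy).2, hyx⟩

namespace IsScheduleSet

variable {G : Fin K → Fin W} {s : Fin K → ℕ → SchedSym W}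

theorem exists_delivery (hs : IsScheduleSet W K L G s) {τ : Fin K → ℕ} (hτ : ∀ x, τ x < L)
    {i j : Fin K} (hij : i ≠ j) :
    ∃ t < L, s i ((t + τ i) % L) = .T (G i) ∧ s j ((t + τ j) % L) = .R (G i) ∧
      ∀ x ∈ interferers G i j, s x ((t + τ x) % L) ≠ .T (G i) := by
  simp only [interferers, mem_filter, mem_univ, true_and, and_imp]
  by_cases hG : G i = G j
  · exact hs.intra τ hτ i j hij hG
  · obtain ⟨t, ht, hi, hj, hx⟩ := hs.inter τ hτ i j hG
    exact ⟨t, ht, hi, hj, fun x hxi _ hxG => hx x hxi hxG⟩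

theorem exists_transmit_slot (hs : IsScheduleSet W K L G s) (hL : 0 < L) {i j : Fin K}
    (hij : i ≠ j) (hG : G i = G j) : ∃ t < L, s i t = .T (G i) := by
  obtain ⟨t, ht, hi, -⟩ := hs.intra (fun _ => 0) (fun _ => hL) i j hij hG
  exact ⟨t, ht, by simpa [Nat.mod_eq_of_lt ht] using hi⟩

/-- Were the slots of the left-hand side covered by slots `c x` of interferers `x`, delaying
each interferer `x` so that it transmits at slot `c x` would block all of them. -/
theorem not_subset_image_interferers (hs : IsScheduleSet W K L G s) (hL : 0 < L) {i j : Fin K}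
    (hij : i ≠ j) {σ : ℕ} (hσ : σ < L) (c : Fin K → ℕ) :
    ¬ {t ∈ symbolSlots L (s i) (.T (G i)) | s j ((t + σ) % L) = .R (G i)} ⊆
      (interferers G i j).image c := by
  intro hc
  have hslot : ∀ x ∈ interferers G i j, ∃ u < L, s x u = .T (G i) := fun x hx => by
    simp only [interferers, mem_filter, mem_univ, true_and] at hx
    simpa only [hx.2.2] using hs.exists_transmit_slot hL hx.1 hx.2.2
  choose! u hu using hslot
  set τ : Fin K → ℕ := fun x => if x = i then 0 else if x = j then σ else (u x + L - c x) % L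
  have hτ : ∀ x, τ x < L := fun x => by
    simp only [τ]; split_ifs <;> first | exact hL | exact hσ | exact Nat.mod_lt _ hL
  obtain ⟨t, ht, hi, hj, hblock⟩ := hs.exists_delivery hτ hij
  simp only [τ, ↓reduceIte, hij.symm, add_zero, Nat.mod_eq_of_lt ht] at hi hj
  have hdelivery : t ∈ {t ∈ symbolSlots L (s i) (.T (G i)) | s j ((t + σ) % L) = .R (G i)} := by
    simp [symbolSlots, ht, hi, hj]
  obtain ⟨x, hx, rfl⟩ := mem_image.mp (hc hdelivery)
  have hxi : x ≠ i := (mem_filter.mp hx).2.1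
  have hxj : x ≠ j := (mem_filter.mp hx).2.2.1
  apply hblock x hx
  simpa only [τ, if_neg hxi, if_neg hxj, Nat.add_mod_add_sub_mod ht (hu x hx).1] using (hu x hx).2

theorem card_interferers_lt (hs : IsScheduleSet W K L G s) (hL : 0 < L) {i j : Fin K}
    (hij : i ≠ j) {σ : ℕ} (hσ : σ < L) :
    #(interferers G i j) <
      #{t ∈ symbolSlots L (s i) (.T (G i)) | s j ((t + σ) % L) = .R (G i)} := by
  by_contra! h
  obtain ⟨c, hc⟩ := exists_subset_image_of_card_le h
  exact hs.not_subset_image_interferers hL hij hσ c hc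

theorem card_interferers_succ_mul_le (hs : IsScheduleSet W K L G s) (hL : 0 < L) {i j : Fin K}
    (hij : i ≠ j) :
    (#(interferers G i j) + 1) * L ≤
      #(symbolSlots L (s i) (.T (G i))) * #(symbolSlots L (s j) (.R (G i))) :=
  calc (#(interferers G i j) + 1) * L
      = ∑ _σ ∈ range L, (#(interferers G i j) + 1) := by
        rw [sum_const, card_range, smul_eq_mul, mul_comm]
    _ ≤ ∑ σ ∈ range L,
          #{t ∈ symbolSlots L (s i) (.T (G i)) | s j ((t + σ) % L) = .R (G i)} :=
        sum_le_sum fun σ hσ => hs.card_interferers_lt hL hij (mem_range.mp hσ)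
    _ ≤ _ := sum_card_filter_shift_le L _ (s j · = .R (G i))

theorem card_transmit_add_sum_card_receive (hs : IsScheduleSet W K L G s) (i : Fin K) :
    #(symbolSlots L (s i) (.T (G i))) + ∑ m, #(symbolSlots L (s i) (.R m)) = L :=
  card_symbolSlots_transmit_add_sum_receive (s i) (G i) (hs.own_channel i)

end IsScheduleSet

end Schedule

theorem schedule_set_period_lower_bound_four_general
    (K L W k : ℕ) (hL : 0 < L) (hW : 1 ≤ W)
    (hk : 2 ≤ k)
    (G : Fin K → Fin W)
    (hkmin : ∀ m : Fin W, k ≤ groupSize G m)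
    (s : Fin K → ℕ → SchedSym W) (hs : IsScheduleSet W K L G s) :
    4 * W * (k - 1) ≤ L := by
  set a : Fin K → ℕ := fun i => #(symbolSlots L (s i) (.T (G i)))
  set b : Fin K → Fin W → ℕ := fun i m => #(symbolSlots L (s i) (.R m))
  have : Nonempty (Fin K) := Fin.pos_iff_nonempty.mp <| by
    have := hkmin ⟨0, hW⟩
    have := groupSize_le G ⟨0, hW⟩
    omega
  obtain ⟨i₀, hi₀⟩ := Finite.exists_max a
  have hchannel : ∀ m, (k - 1) * L ≤ a i₀ * b i₀ m := fun m => by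
    obtain ⟨i, rfl, hi⟩ := exists_ne_of_two_le_groupSize (hk.trans (hkmin m)) i₀
    calc (k - 1) * L ≤ (#(interferers G i i₀) + 1) * L := by
          have := groupSize_le_card_interferers_add_two G i i₀
          have := hkmin (G i)
          gcongr
          omega
      _ ≤ a i * b i₀ (G i) := hs.card_interferers_succ_mul_le hL hi
      _ ≤ a i₀ * b i₀ (G i) := Nat.mul_le_mul_right _ (hi₀ i)
  have hsplit : a i₀ + ∑ m, b i₀ m = L := hs.card_transmit_add_sum_card_receive i₀
  have hsum : W * ((k - 1) * L) ≤ a i₀ * (L - a i₀) :=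
    calc W * ((k - 1) * L) = ∑ _m : Fin W, (k - 1) * L := by simp
      _ ≤ ∑ m, a i₀ * b i₀ m := sum_le_sum fun m _ => hchannel m
      _ = a i₀ * (L - a i₀) := by rw [← mul_sum, ← hsplit, Nat.add_sub_cancel_left]
  refine Nat.le_of_mul_le_mul_right ?_ hL
  calc 4 * W * (k - 1) * L = 4 * (W * ((k - 1) * L)) := by ring
    _ ≤ 4 * a i₀ * (L - a i₀) := by rw [mul_assoc]; gcongr
    _ ≤ (a i₀ + (L - a i₀)) ^ 2 := four_mul_le_sq_add _ _
    _ = L * L := by rw [Nat.add_sub_cancel' (by omega), sq]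

/-- if `{s_1,...,s_K}` is an `(M,K,L)`-schedule sequence set with
respect to a partition into `W` nonempty groups with smallest group size `k ≥ 2`, then
`L ≥ 4W(k−1)`. -/
theorem schedule_set_period_lower_bound_four
    (M K L W k : ℕ) (hL : 0 < L) (hW : 1 ≤ W) (hWM : W ≤ M) (hMK : M ≤ K)
    (hk : 2 ≤ k)
    (G : Fin K → Fin W) (hG : Function.Surjective G)
    (hkmin : ∀ m : Fin W, k ≤ groupSize G m)
    (hkex : ∃ m : Fin W, groupSize G m = k)
    (s : Fin K → ℕ → SchedSym W) (hs : IsScheduleSet W K L G s) :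
    4 * W * (k - 1) ≤ L :=
  schedule_set_period_lower_bound_four_general K L W k hL hW hk G hkmin s hs
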